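/- arXiv:2512.15029 — 6 statements merged into one kernel-verified Lean document; each statement's English description precedes it below -/
import Mathlib

section
/- For every real number a > 1, (a·√(2a−1) − 2a + 1)/(a−1)² > 1/(2a). -/
theorem h_pos (a : ℝ) (ha : 1 < a) :
    (a * Real.sqrt (2 * a - 1) - 2 * a + 1) / (a - 1) ^ 2 > 1 / (2 * a) := by
  set s := Real.sqrt (2 * a - 1) with hs
  have h1 : (0:ℝ) < 2 * a - 1 := by linarith
  have hs2 : s ^ 2 = 2 * a - 1 := Real.sq_sqrt h1.le
  have hsp : 0 < s := Real.sqrt_pos.mpr h1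
  have key : 5 * a ^ 2 - 4 * a + 1 < 2 * a ^ 2 * s := by
    have hL : 0 < 2 * a ^ 2 * s := by positivity
    have hfac : 0 < (a - 1) ^ 3 * (8 * a ^ 2 - 5 * a + 1) := by
      have h2 : 0 < (a - 1) ^ 3 := pow_pos (by linarith) 3
      have h3 : 0 < 8 * a ^ 2 - 5 * a + 1 := by nlinarith
      exact mul_pos h2 h3
    have hsq : (5 * a ^ 2 - 4 * a + 1) ^ 2 < (2 * a ^ 2 * s) ^ 2 := by
      nlinarith [hs2, hfac]
    exact lt_of_pow_lt_pow_left₀ 2 hL.le hsq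
  rw [gt_iff_lt, div_lt_div_iff₀ (by positivity) (pow_pos (by linarith) 2)]
  nlinarith [key]
end

section
/- The function α_{2,−}(n) = 1 − (n·√(2n−1) − 2n + 1)/(n² − 2n + 1) is strictly monotonically increasing on the interval (1, ∞): for all 1 < n₁ < n₂, α_{2,−}(n₁) < α_{2,−}(n₂). -/
lemma alpha2m_eq (n s : ℝ) (hs : 1 < s) (hn : s ^ 2 = 2 * n - 1) :
    1 - (n * s - 2 * n + 1) / (n ^ 2 - 2 * n + 1) = 1 - 2 * s / (s + 1) ^ 2 := by
  have hn' : n = (s ^ 2 + 1) / 2 := by linarith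
  subst hn'
  have hd : (0:ℝ) < ((s ^ 2 + 1) / 2) ^ 2 - 2 * ((s ^ 2 + 1) / 2) + 1 := by nlinarith [mul_pos (mul_pos (by linarith : (0:ℝ) < s - 1) (by linarith : (0:ℝ) < s + 1)) (mul_pos (by linarith : (0:ℝ) < s - 1) (by linarith : (0:ℝ) < s + 1))]
  have d2 : (0:ℝ) < (s + 1) ^ 2 := by positivity
  have : (((s ^ 2 + 1) / 2) * s - 2 * ((s ^ 2 + 1) / 2) + 1) / (((s ^ 2 + 1) / 2) ^ 2 - 2 * ((s ^ 2 + 1) / 2) + 1) = 2 * s / (s + 1) ^ 2 := by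
    rw [div_eq_div_iff (ne_of_gt hd) (ne_of_gt d2)]
    ring
  linarith

theorem alpha2m_strictMono (n₁ n₂ : ℝ) (h1 : 1 < n₁) (h12 : n₁ < n₂) :
    1 - (n₁ * Real.sqrt (2 * n₁ - 1) - 2 * n₁ + 1) / (n₁ ^ 2 - 2 * n₁ + 1)
      < 1 - (n₂ * Real.sqrt (2 * n₂ - 1) - 2 * n₂ + 1) / (n₂ ^ 2 - 2 * n₂ + 1) := by
  set s₁ := Real.sqrt (2 * n₁ - 1) with hs₁
  set s₂ := Real.sqrt (2 * n₂ - 1) with hs₂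
  have hp1 : (0:ℝ) ≤ 2 * n₁ - 1 := by linarith
  have hp2 : (0:ℝ) ≤ 2 * n₂ - 1 := by linarith
  have hsq1 : s₁ ^ 2 = 2 * n₁ - 1 := Real.sq_sqrt hp1
  have hsq2 : s₂ ^ 2 = 2 * n₂ - 1 := Real.sq_sqrt hp2
  have hs1 : 1 < s₁ := by
    rw [show (1:ℝ) = Real.sqrt 1 by simp [Real.sqrt_one]]
    exact Real.sqrt_lt_sqrt (by norm_num) (by linarith)
  have hlt : s₁ < s₂ := Real.sqrt_lt_sqrt hp1 (by linarith)
  rw [alpha2m_eq n₁ s₁ hs1 hsq1, alpha2m_eq n₂ s₂ (by linarith) hsq2]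
  have d1 : (0:ℝ) < (s₁ + 1) ^ 2 := by positivity
  have d2 : (0:ℝ) < (s₂ + 1) ^ 2 := by positivity
  have key : 2 * s₂ / (s₂ + 1) ^ 2 < 2 * s₁ / (s₁ + 1) ^ 2 := by
    rw [div_lt_div_iff₀ d2 d1]
    nlinarith [mul_pos (sub_pos.mpr hlt) (by nlinarith : (0:ℝ) < s₁ * s₂ - 1)]
  linarith
end

section
/- For every real α with 1/2 < α < 1, there exists a rational number k of the form k = 1 + s/(2m+1) (with s ∈ ℕ⁺, m ∈ ℕ), k > 1, such that 1 − (k√(2k−1) − 2k + 1)/(k−1)² < α < 1 − 1/(2k). -/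
/-!
With `t = √(2k - 1)` one has `2k = t² + 1` and the numerator `k t - 2k + 1` factors as
`t (t - 1)² / 2`, so `α₂₋(k) = 1 - 2t / (t + 1)²`. Hence `α₂₋(k) < 1 - 1/(2k)` amounts to
`(t + 1)² < 2t (t² + 1)`, i.e. `0 < (t - 1)(2t² + t + 1)`, which holds for `t > 1`.
At `k₀ = 1/(2(1 - α))` the right-hand bound equals `α`; moving `k` slightly to the right of `k₀`
keeps `α₂₋(k) < α` by continuity and makes `α < 1 - 1/(2k)` strict, and the numbers
`1 + s/(2m + 1)` accumulate at `k₀` from the right.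
-/

open Filter Set Topology

/-- The paper's `α_{2,−}(k)`. -/
noncomputable def alphaTwoMinus (k : ℝ) : ℝ :=
  1 - (k * Real.sqrt (2 * k - 1) - 2 * k + 1) / (k - 1) ^ 2

lemma alphaTwoMinus_eq {k : ℝ} (hk : 1 < k) :
    alphaTwoMinus k = 1 - 2 * Real.sqrt (2 * k - 1) / (Real.sqrt (2 * k - 1) + 1) ^ 2 := by
  rw [alphaTwoMinus, sub_right_inj]
  set t := Real.sqrt (2 * k - 1)
  have ht : t ^ 2 = 2 * k - 1 := Real.sq_sqrt (by linarith)
  have ht0 : 0 ≤ t := Real.sqrt_nonneg _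
  rw [div_eq_div_iff (by nlinarith) (by positivity)]
  linear_combination (k * t + 1) * ht

lemma alphaTwoMinus_lt {k : ℝ} (hk : 1 < k) : alphaTwoMinus k < 1 - 1 / (2 * k) := by
  rw [alphaTwoMinus_eq hk]
  set t := Real.sqrt (2 * k - 1)
  have ht : t ^ 2 = 2 * k - 1 := Real.sq_sqrt (by linarith)
  have ht1 : 1 < t := by nlinarith [Real.sqrt_nonneg (2 * k - 1)]
  have key : (t + 1) ^ 2 < 2 * t * (2 * k) := by
    nlinarith [mul_pos (sub_pos.2 ht1) (by positivity : 0 < 2 * t ^ 2 + t + 1)]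
  have : 1 / (2 * k) < 2 * t / (t + 1) ^ 2 := by
    rw [div_lt_div_iff₀ (by linarith) (by positivity)]
    linarith
  linarith

lemma continuousAt_alphaTwoMinus {k : ℝ} (hk : k ≠ 1) : ContinuousAt alphaTwoMinus k := by
  unfold alphaTwoMinus
  exact continuousAt_const.sub <| ContinuousAt.div (by fun_prop) (by fun_prop)
    (pow_ne_zero _ (sub_ne_zero.2 hk))

lemma exists_pnat_div_odd_mem_Ioo {a b : ℝ} (ha : 0 ≤ a) (hab : a < b) :
    ∃ (s : ℕ+) (m : ℕ), (s : ℝ) / (2 * m + 1) ∈ Ioo a b := by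
  obtain ⟨m, hm⟩ := exists_nat_one_div_lt (sub_pos.2 hab)
  set d : ℝ := 2 * m + 1
  have hd : 0 < d := by positivity
  have hsmall : 1 / d < b - a :=
    (one_div_le_one_div_of_le (by positivity) (by linarith [m.cast_nonneg (α := ℝ)])).trans_lt hm
  set n := ⌊a * d⌋₊
  have hlow : a * d < n + 1 := Nat.lt_floor_add_one _
  have hup : (n : ℝ) ≤ a * d := Nat.floor_le (by positivity)
  refine ⟨⟨n + 1, n.succ_pos⟩, m, ?_, ?_⟩ <;> rw [PNat.mk_coe, Nat.cast_succ]
  · rwa [lt_div_iff₀ hd]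
  · calc (n + 1 : ℝ) / d ≤ (a * d + 1) / d := by gcongr
      _ = a + 1 / d := by field_simp
      _ < b := by linarith

lemma frequently_nhdsGT_one_add_pnat_div_odd {x : ℝ} (hx : 1 ≤ x) :
    ∃ᶠ k in 𝓝[>] x, ∃ (s : ℕ+) (m : ℕ), k = 1 + (s : ℝ) / (2 * m + 1) := by
  rw [frequently_iff]
  intro U hU
  obtain ⟨u, hxu, hU⟩ := mem_nhdsGT_iff_exists_Ioo_subset.1 hU
  obtain ⟨s, m, hlo, hhi⟩ :=
    exists_pnat_div_odd_mem_Ioo (sub_nonneg.2 hx) (sub_lt_sub_right hxu 1)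
  exact ⟨_, hU ⟨by linarith, by linarith⟩, s, m, rfl⟩

theorem lemma_3_2 (α : ℝ) (h1 : 1 / 2 < α) (h2 : α < 1) :
    ∃ (s : ℕ+) (m : ℕ) (k : ℝ),
      k = 1 + (s : ℝ) / (2 * (m : ℝ) + 1) ∧ 1 < k ∧
      1 - (k * Real.sqrt (2 * k - 1) - 2 * k + 1) / (k - 1) ^ 2 < α ∧
      α < 1 - 1 / (2 * k) := by
  set k₀ := 1 / (2 * (1 - α))
  have hk₀ : 1 < k₀ := by rw [lt_div_iff₀ (by linarith)]; linarith
  have hα : α = 1 - 1 / (2 * k₀) := by rw [mul_one_div, one_div_div]; field_simp; ring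
  have hnear : ∀ᶠ k in 𝓝[>] k₀, alphaTwoMinus k < α :=
    nhdsWithin_le_nhds <| (continuousAt_alphaTwoMinus hk₀.ne').eventually_lt continuousAt_const
      (hα ▸ alphaTwoMinus_lt hk₀)
  obtain ⟨k, ⟨s, m, rfl⟩, hk, hk₀k⟩ :=
    ((frequently_nhdsGT_one_add_pnat_div_odd hk₀.le).and_eventually
      (hnear.and self_mem_nhdsWithin)).exists
  refine ⟨s, m, _, rfl, hk₀.trans hk₀k, hk, ?_⟩
  rw [hα]
  gcongr
end

section
/- Let k ∈ ℕ and s ∈ ℕ⁺, and set c = 2k+1, d = c + 2s. Then there exists ε > 0 such that for all real numbers A and U: A · U^{c + 2s} ≥ ε·|A|^{(2c+2s)/c} − |U^c − A|^{(2c+2s)/c}, where for a nonnegative real x and real exponent p, x^p denotes the real power. -/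
theorem rpow_superadd {a b P : ℝ} (ha : 0 ≤ a) (hb : 0 ≤ b) (hP : 1 ≤ P) :
    a ^ P + b ^ P ≤ (a + b) ^ P := by
  have h1 : P - 1 + 1 ≠ 0 := by intro h; linarith
  have ea : a ^ P = a ^ (P - 1) * a := by
    nth_rewrite 1 [show P = P - 1 + 1 by ring]
    rw [Real.rpow_add' ha h1, Real.rpow_one]
  have eb : b ^ P = b ^ (P - 1) * b := by
    nth_rewrite 1 [show P = P - 1 + 1 by ring]
    rw [Real.rpow_add' hb h1, Real.rpow_one]
  have eab : (a + b) ^ P = (a + b) ^ (P - 1) * (a + b) := by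
    nth_rewrite 1 [show P = P - 1 + 1 by ring]
    rw [Real.rpow_add' (by linarith) h1, Real.rpow_one]
  have ma : a ^ (P - 1) ≤ (a + b) ^ (P - 1) :=
    Real.rpow_le_rpow ha (by linarith) (by linarith)
  have mb : b ^ (P - 1) ≤ (a + b) ^ (P - 1) :=
    Real.rpow_le_rpow hb (by linarith) (by linarith)
  rw [ea, eb, eab]
  nlinarith [mul_le_mul_of_nonneg_right ma ha, mul_le_mul_of_nonneg_right mb hb]


theorem lemma_7_3 (k : ℕ) (s : ℕ+) :
    ∃ ε : ℝ, 0 < ε ∧ ∀ A U : ℝ,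
      ε * |A| ^ ((2 * (2 * (k : ℝ) + 1) + 2 * (s : ℝ)) / (2 * (k : ℝ) + 1))
          - |U ^ (2 * k + 1) - A| ^ ((2 * (2 * (k : ℝ) + 1) + 2 * (s : ℝ)) / (2 * (k : ℝ) + 1))
        ≤ A * U ^ (2 * k + 1 + 2 * (s : ℕ)) := by
  set c : ℝ := 2 * (k : ℝ) + 1 with hc_def
  have hc : (0:ℝ) < c := by positivity
  set p : ℝ := (2 * c + 2 * (s : ℝ)) / c with hp_def
  have hs : (0:ℝ) < (s:ℝ) := by exact_mod_cast s.pos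
  have hp2 : 2 ≤ p := by
    rw [hp_def, le_div_iff₀ hc]; nlinarith
  have hp0 : (0:ℝ) < p := by linarith
  refine ⟨(1/2 : ℝ) ^ p, Real.rpow_pos_of_pos (by norm_num) p, ?_⟩
  intro A U
  set q : ℝ := p - 1 with hq_def
  have hq1 : (1:ℝ) ≤ q := by rw [hq_def]; linarith
  have hq0 : (0:ℝ) ≤ q := by linarith
  have hcq : c * q = c + 2 * (s:ℝ) := by
    rw [hq_def, hp_def]; field_simp; ring
  set x : ℝ := U ^ (2 * k + 1) with hx_def
  set t : ℝ := U ^ (2 * (s:ℕ)) with ht_def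
  have ht0 : (0:ℝ) ≤ t := (even_two_mul (s:ℕ)).pow_nonneg U
  have hUpow : U ^ (2 * k + 1 + 2 * (s:ℕ)) = x * t := by
    rw [hx_def, ht_def, pow_add]
  have habs : |x| = |U| ^ (2 * k + 1) := by rw [hx_def, abs_pow]
  have htabs : |U| ^ (2 * (s:ℕ)) = t := by
    rw [ht_def]; exact (even_two_mul (s:ℕ)).pow_abs U
  have hkey : |x| ^ q = |x| * t := by
    rw [habs, ← Real.rpow_natCast |U| (2*k+1), ← Real.rpow_mul (abs_nonneg U)]
    have h1 : ((2*k+1 : ℕ) : ℝ) = c := by push_cast [hc_def]; ring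
    have h2 : ((2*k+1 : ℕ) : ℝ) * q = ((2*k+1+2*(s:ℕ) : ℕ) : ℝ) := by
      rw [h1, hcq]; push_cast; ring
    rw [h2, Real.rpow_natCast, pow_add, htabs, Real.rpow_natCast]
  rw [hUpow]
  have hApq : |A| ^ p = |A| * |A| ^ q := by
    have : p = 1 + q := by rw [hq_def]; ring
    rw [this, Real.rpow_add' (abs_nonneg A) (by rw [← this]; positivity), Real.rpow_one]
  rcases le_or_gt 0 (A * x) with hax | hax
  · -- A and x have the same sign (weakly)
    have hAx : A * x = |A| * |x| := by rw [← abs_mul, abs_of_nonneg hax]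
    have hRHS : A * (x * t) = |A| * |x| ^ q := by
      rw [hkey, ← mul_assoc, hAx, mul_assoc]
    rw [hRHS]
    rcases le_or_gt |A| (2 * |x|) with h1 | h1
    · -- |A| ≤ 2|x|
      have hA : |A| ^ q ≤ 2 ^ q * |x| ^ q := by
        calc |A| ^ q ≤ (2 * |x|) ^ q := Real.rpow_le_rpow (abs_nonneg A) h1 hq0
        _ = 2 ^ q * |x| ^ q := Real.mul_rpow (by norm_num) (abs_nonneg x)
      have hsmall : (1/2 : ℝ) ^ p * 2 ^ q ≤ 1 := by
        have h2q : (2:ℝ) ^ q ≤ 2 ^ p :=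
          Real.rpow_le_rpow_of_exponent_le (by norm_num) (by rw [hq_def]; linarith)
        have hep : (0:ℝ) ≤ (1/2 : ℝ) ^ p := Real.rpow_nonneg (by norm_num) p
        calc (1/2 : ℝ) ^ p * 2 ^ q ≤ (1/2 : ℝ) ^ p * 2 ^ p :=
              mul_le_mul_of_nonneg_left h2q hep
          _ = ((1/2 : ℝ) * 2) ^ p := (Real.mul_rpow (by norm_num) (by norm_num)).symm
          _ = 1 := by norm_num
      have hb : (0:ℝ) ≤ |x - A| ^ p := Real.rpow_nonneg (abs_nonneg _) p
      have hxq : (0:ℝ) ≤ |x| ^ q := Real.rpow_nonneg (abs_nonneg x) q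
      have hep : (0:ℝ) < (1/2 : ℝ) ^ p := Real.rpow_pos_of_pos (by norm_num) p
      nlinarith [mul_le_mul_of_nonneg_left hA (mul_nonneg hep.le (abs_nonneg A)),
        mul_le_mul_of_nonneg_right hsmall (mul_nonneg (abs_nonneg A) hxq)]
    · -- 2|x| < |A| : then |x - A| ≥ |A|/2
      have h2 : |A| / 2 ≤ |x - A| := by
        have := abs_sub_abs_le_abs_sub A x
        rw [abs_sub_comm] at this
        linarith
      have h3 : (|A| / 2) ^ p ≤ |x - A| ^ p :=
        Real.rpow_le_rpow (by positivity) h2 hp0.le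
      have h4 : (|A| / 2) ^ p = (1/2 : ℝ) ^ p * |A| ^ p := by
        rw [Real.div_rpow (abs_nonneg A) (by norm_num),
          Real.div_rpow (by norm_num) (by norm_num : (0:ℝ) ≤ 2), Real.one_rpow]
        ring
      have h5 : (0:ℝ) ≤ |A| * |x| ^ q :=
        mul_nonneg (abs_nonneg A) (Real.rpow_nonneg (abs_nonneg x) q)
      linarith [h3, h4.symm.le]
    -- end
  · -- opposite signs
    have hAx : A * x = -(|A| * |x|) := by
      rw [← abs_mul]; rw [abs_of_neg hax]; ring
    have hRHS : A * (x * t) = -(|A| * |x| ^ q) := by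
      rw [hkey, ← mul_assoc, hAx]; ring
    rw [hRHS]
    have hsum : |x - A| = |x| + |A| := by
      rcases mul_neg_iff.mp hax with ⟨hA, hx⟩ | ⟨hA, hx⟩
      · rw [abs_of_neg hx, abs_of_pos hA, abs_of_neg (by linarith : x - A < 0)]; ring
      · rw [abs_of_pos hx, abs_of_neg hA, abs_of_pos (by linarith : 0 < x - A)]; ring
    rw [hsum]
    have hsuper : |x| ^ q + |A| ^ q ≤ (|x| + |A|) ^ q :=
      rpow_superadd (abs_nonneg x) (abs_nonneg A) hq1
    have hsplit : (|x| + |A|) ^ p = (|x| + |A|) ^ q * (|x| + |A|) := by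
      have hpq : p = q + 1 := by rw [hq_def]; ring
      rw [hpq, Real.rpow_add' (by positivity) (by rw [← hpq]; exact hp0.ne'), Real.rpow_one]
    have he1 : (1/2 : ℝ) ^ p ≤ 1 :=
      Real.rpow_le_one (by norm_num) (by norm_num) hp0.le
    have hxq : (0:ℝ) ≤ |x| ^ q := Real.rpow_nonneg (abs_nonneg x) q
    have hAq : (0:ℝ) ≤ |A| ^ q := Real.rpow_nonneg (abs_nonneg A) q
    have hAp : (0:ℝ) ≤ |A| ^ p := Real.rpow_nonneg (abs_nonneg A) p
    nlinarith [mul_le_mul_of_nonneg_right hsuper (by positivity : (0:ℝ) ≤ |x| + |A|),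
      mul_nonneg hxq (abs_nonneg x), mul_nonneg hAq (abs_nonneg x),
      mul_le_mul_of_nonneg_right he1 hAp]
end

section
/- Let R > 0 and let v : [0, R] → ℝ be continuously differentiable with v(0) = 0. Then for every r ∈ [0, R], v(r)² ≤ ∫₀^R ( v′(s)² + (v(s)/s)² ) · s ds. -/
/-!
Since `v 0 = 0`, the fundamental theorem of calculus gives `v r ^ 2 = ∫₀^r 2 v v'`, and pointwise
`2 v v' ≤ (v' ^ 2 + (v / s) ^ 2) s` by AM-GM applied to `v'` and `v / s`. The right-hand side is
nonnegative, so the integral over `[0, r]` is at most the one over `[0, R]`. It is integrable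
because `|v s| ≤ (sup |v'|) s` keeps `v / s` bounded.
-/

open Set MeasureTheory intervalIntegral

theorem two_mul_mul_le_sq_add_div_sq_mul {s : ℝ} (hs : 0 < s) (a b : ℝ) :
    2 * a * b ≤ (b ^ 2 + (a / s) ^ 2) * s := by
  obtain ⟨t, rfl⟩ : ∃ t, a = t * s := ⟨a / s, (div_mul_cancel₀ a hs.ne').symm⟩
  rw [mul_div_cancel_right₀ t hs.ne']
  nlinarith [mul_nonneg (sq_nonneg (b - t)) hs.le]

section

variable {v v' : ℝ → ℝ} {R : ℝ}

theorem abs_le_mul_of_hasDerivAt_of_apply_zero {C : ℝ}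
    (hderiv : ∀ s ∈ Icc 0 R, HasDerivAt v (v' s) s) (hbound : ∀ s ∈ Icc 0 R, |v' s| ≤ C)
    (h0 : v 0 = 0) : ∀ s ∈ Icc 0 R, |v s| ≤ C * s := by
  intro s hs
  simpa [h0] using norm_image_sub_le_of_norm_deriv_le_segment'
    (fun x hx ↦ (hderiv x hx).hasDerivWithinAt) (fun x hx ↦ hbound x (Ico_subset_Icc_self hx)) s hs

theorem intervalIntegrable_sq_deriv_add_sq_div_mul (hR : 0 ≤ R)
    (hderiv : ∀ s ∈ Icc 0 R, HasDerivAt v (v' s) s) (hcont : ContinuousOn v' (Icc 0 R))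
    (h0 : v 0 = 0) :
    IntervalIntegrable (fun s ↦ ((v' s) ^ 2 + (v s / s) ^ 2) * s) volume 0 R := by
  obtain ⟨C, hC⟩ := isCompact_Icc.exists_bound_of_continuousOn hcont
  simp only [Real.norm_eq_abs] at hC
  have hv := abs_le_mul_of_hasDerivAt_of_apply_zero hderiv hC h0
  have hbound : ∀ s ∈ Ioc 0 R, ‖((v' s) ^ 2 + (v s / s) ^ 2) * s‖ ≤ (C ^ 2 + C ^ 2) * R := by
    intro s hs
    have hs' : s ∈ Icc 0 R := Ioc_subset_Icc_self hs
    have hquot : |v s / s| ≤ C := by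
      rw [abs_div, abs_of_pos hs.1, div_le_iff₀ hs.1]
      exact hv s hs'
    have hv'_sq : v' s ^ 2 ≤ C ^ 2 := by simpa using pow_le_pow_left₀ (abs_nonneg _) (hC s hs') 2
    have hquot_sq : (v s / s) ^ 2 ≤ C ^ 2 := by simpa using pow_le_pow_left₀ (abs_nonneg _) hquot 2
    rw [Real.norm_eq_abs, abs_of_nonneg (mul_nonneg (by positivity) hs.1.le)]
    exact mul_le_mul (add_le_add hv'_sq hquot_sq) hs.2 hs.1.le (by positivity)
  have hcont_Ioc : ContinuousOn (fun s ↦ ((v' s) ^ 2 + (v s / s) ^ 2) * s) (Ioc 0 R) := by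
    have hv_cont := (HasDerivAt.continuousOn hderiv).mono Ioc_subset_Icc_self
    exact (((hcont.mono Ioc_subset_Icc_self).pow 2).add
      ((hv_cont.div continuousOn_id fun s hs ↦ hs.1.ne').pow 2)).mul continuousOn_id
  rw [intervalIntegrable_iff_integrableOn_Ioc_of_le hR]
  exact .of_bound measure_Ioc_lt_top (hcont_Ioc.aestronglyMeasurable measurableSet_Ioc) _
    ((ae_restrict_iff' measurableSet_Ioc).2 (.of_forall hbound))

theorem sq_le_integral_sq_deriv_add_sq_div_mul {r : ℝ} (hr : 0 ≤ r)
    (hderiv : ∀ s ∈ Icc 0 r, HasDerivAt v (v' s) s) (hcont : ContinuousOn v' (Icc 0 r))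
    (h0 : v 0 = 0) : v r ^ 2 ≤ ∫ s in 0..r, ((v' s) ^ 2 + (v s / s) ^ 2) * s := by
  have hcont_deriv_sq : ContinuousOn (fun s ↦ 2 * v s * v' s) (Icc 0 r) :=
    (continuousOn_const.mul (HasDerivAt.continuousOn hderiv)).mul hcont
  calc v r ^ 2 = ∫ s in 0..r, 2 * v s * v' s := by
        rw [integral_eq_sub_of_hasDerivAt (f := fun s ↦ v s ^ 2) _
          (hcont_deriv_sq.intervalIntegrable_of_Icc hr)]
        · simp [h0]
        · intro s hs
          rw [uIcc_of_le hr] at hs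
          simpa [mul_comm] using (hderiv s hs).fun_pow 2
    _ ≤ ∫ s in 0..r, ((v' s) ^ 2 + (v s / s) ^ 2) * s :=
        integral_mono_on_of_le_Ioo hr (hcont_deriv_sq.intervalIntegrable_of_Icc hr)
          (intervalIntegrable_sq_deriv_add_sq_div_mul hr hderiv hcont h0)
          fun s hs ↦ two_mul_mul_le_sq_add_div_sq_mul hs.1 _ _

end

theorem radial_Linfty_2d_general (R : ℝ) (v v' : ℝ → ℝ)
    (hderiv : ∀ s ∈ Set.Icc (0 : ℝ) R, HasDerivAt v (v' s) s)
    (hcont : ContinuousOn v' (Set.Icc (0 : ℝ) R))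
    (h0 : v 0 = 0) :
    ∀ r ∈ Set.Icc (0 : ℝ) R,
      (v r) ^ 2 ≤ ∫ s in (0 : ℝ)..R, ((v' s) ^ 2 + (v s / s) ^ 2) * s := by
  rintro r ⟨hr0, hrR⟩
  have hsub : Icc 0 r ⊆ Icc 0 R := Icc_subset_Icc_right hrR
  have hnonneg : ∀ s ∈ Ioc 0 R, 0 ≤ ((v' s) ^ 2 + (v s / s) ^ 2) * s :=
    fun s hs ↦ mul_nonneg (by positivity) hs.1.le
  calc v r ^ 2 ≤ ∫ s in 0..r, ((v' s) ^ 2 + (v s / s) ^ 2) * s :=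
        sq_le_integral_sq_deriv_add_sq_div_mul hr0 (fun s hs ↦ hderiv s (hsub hs))
          (hcont.mono hsub) h0
    _ ≤ ∫ s in 0..R, ((v' s) ^ 2 + (v s / s) ^ 2) * s :=
        integral_mono_interval le_rfl hr0 hrR
          ((ae_restrict_iff' measurableSet_Ioc).2 (.of_forall hnonneg))
          (intervalIntegrable_sq_deriv_add_sq_div_mul (hr0.trans hrR) hderiv hcont h0)

theorem radial_Linfty_2d (R : ℝ) (hR : 0 < R) (v v' : ℝ → ℝ)
    (hderiv : ∀ s ∈ Set.Icc (0 : ℝ) R, HasDerivAt v (v' s) s)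
    (hcont : ContinuousOn v' (Set.Icc (0 : ℝ) R))
    (h0 : v 0 = 0) :
    ∀ r ∈ Set.Icc (0 : ℝ) R,
      (v r) ^ 2 ≤ ∫ s in (0 : ℝ)..R, ((v' s) ^ 2 + (v s / s) ^ 2) * s :=
  radial_Linfty_2d_general R v v' hderiv hcont h0
end

section
/- Let N ≥ 1, let Ω be the open ball of radius R > 0 centered at the origin in ℝ^N, let γ > 1, and let ρ : Ω → [0, ∞) be measurable with ρ = 0 almost everywhere on the ball B_r̄ of radius r̄ ∈ [0, R]. Suppose ∫_Ω ρ dx = M₀ > 0 and (1/(γ−1))∫_Ω ρ^γ dx ≤ E₀ with E₀ > 0. Then r̄^N ≤ R^N − M₀^{γ/(γ−1)} / ( ω_N · ((γ−1)E₀)^{1/(γ−1)} ), where ω_N is the Lebesgue measure of the unit ball in ℝ^N. -/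
/-! The mass of `ρ` lives on the annulus `B_R \ B_r̄`, so Hölder's inequality with exponents
`γ` and `γ / (γ - 1)` bounds `M₀ ^ (γ / (γ - 1))` by `((γ - 1) E₀) ^ (1 / (γ - 1))` times the volume
`ω_N (R ^ N - r̄ ^ N)` of the annulus; solving for `r̄ ^ N` gives the bound. -/

open MeasureTheory Metric

open scoped ENNReal

theorem setLIntegral_sdiff_of_ae_eq_zero {α : Type*} [MeasurableSpace α] {μ : Measure α}
    {f : α → ℝ≥0∞} {s : Set α} (t : Set α) (hs : MeasurableSet s)
    (hf : f =ᵐ[μ.restrict s] 0) :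
    ∫⁻ x in t \ s, f x ∂μ = ∫⁻ x in t, f x ∂μ := by
  rw [← lintegral_inter_add_sdiff f t hs,
    lintegral_congr_ae (ae_restrict_of_ae_restrict_of_subset Set.inter_subset_right hf)]
  simp

theorem lintegral_rpow_le_lintegral_rpow_mul_measure_univ {α : Type*} [MeasurableSpace α]
    {μ : Measure α} {p : ℝ} (hp : 1 < p) {f : α → ℝ≥0∞} (hf : AEMeasurable f μ) :
    (∫⁻ x, f x ∂μ) ^ (p / (p - 1)) ≤ (∫⁻ x, f x ^ p ∂μ) ^ (1 / (p - 1)) * μ Set.univ := by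
  have hp₀ : 0 < p - 1 := by linarith
  have hholder := ENNReal.lintegral_mul_le_Lp_mul_Lq μ (.conjExponent hp) hf aemeasurable_const
    (g := 1)
  simp only [Pi.mul_apply, Pi.one_apply, mul_one, ENNReal.one_rpow, lintegral_one] at hholder
  calc (∫⁻ x, f x ∂μ) ^ (p / (p - 1))
      ≤ ((∫⁻ x, f x ^ p ∂μ) ^ (1 / p) * μ Set.univ ^ (1 / (p / (p - 1)))) ^ (p / (p - 1)) :=
        ENNReal.rpow_le_rpow hholder (by positivity)
    _ = (∫⁻ x, f x ^ p ∂μ) ^ (1 / (p - 1)) * μ Set.univ := by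
        rw [ENNReal.mul_rpow_of_nonneg _ _ (by positivity), ← ENNReal.rpow_mul, ← ENNReal.rpow_mul,
          one_div_mul_cancel (by positivity), ENNReal.rpow_one]
        congr 2
        field_simp

theorem addHaar_ball_sdiff_ball {E : Type*} [NormedAddCommGroup E] [NormedSpace ℝ E]
    [MeasurableSpace E] [BorelSpace E] [FiniteDimensional ℝ E] [Nontrivial E]
    (μ : Measure E) [μ.IsAddHaarMeasure] (x : E) {r R : ℝ} (hr : 0 ≤ r) (hrR : r ≤ R) :
    μ (ball x R \ ball x r) =
      ENNReal.ofReal (R ^ Module.finrank ℝ E - r ^ Module.finrank ℝ E) * μ (ball 0 1) := by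
  rw [measure_sdiff (ball_subset_ball hrR) measurableSet_ball.nullMeasurableSet
      measure_ball_lt_top.ne, Measure.addHaar_ball _ _ hr, Measure.addHaar_ball _ _ (hr.trans hrR),
    ← ENNReal.sub_mul (fun _ _ => measure_ball_lt_top.ne),
    ← ENNReal.ofReal_sub _ (pow_nonneg hr _)]

theorem vacuum_radius_bound_general (N : ℕ) (hN : 1 ≤ N) (R rbar : ℝ)
    (hrbar : 0 ≤ rbar) (hrR : rbar ≤ R) (γ : ℝ) (hγ : 1 < γ)
    (ρ : EuclideanSpace ℝ (Fin N) → ℝ) (hmeas : Measurable ρ) (hnn : ∀ x, 0 ≤ ρ x)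
    (hvac : ∀ᵐ x ∂(volume.restrict (ball (0 : EuclideanSpace ℝ (Fin N)) rbar)), ρ x = 0)
    (M₀ E₀ : ℝ) (hM : 0 < M₀) (hE : 0 < E₀)
    (hmass : ∫⁻ x in ball (0 : EuclideanSpace ℝ (Fin N)) R, ENNReal.ofReal (ρ x)
        = ENNReal.ofReal M₀)
    (henergy : ∫⁻ x in ball (0 : EuclideanSpace ℝ (Fin N)) R, ENNReal.ofReal ((ρ x) ^ γ)
        ≤ ENNReal.ofReal ((γ - 1) * E₀)) :
    rbar ^ N ≤ R ^ N -
      M₀ ^ (γ / (γ - 1)) /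
        ((volume (ball (0 : EuclideanSpace ℝ (Fin N)) 1)).toReal
          * ((γ - 1) * E₀) ^ (1 / (γ - 1))) := by
  have : Nontrivial (EuclideanSpace ℝ (Fin N)) :=
    Module.nontrivial_of_finrank_pos (R := ℝ) (by rwa [finrank_euclideanSpace_fin])
  set s := ball (0 : EuclideanSpace ℝ (Fin N)) R \ ball 0 rbar
  set ω := volume (ball (0 : EuclideanSpace ℝ (Fin N)) 1)
  have hmass_s : ∫⁻ x in s, ENNReal.ofReal (ρ x) = ENNReal.ofReal M₀ := by
    rw [setLIntegral_sdiff_of_ae_eq_zero _ measurableSet_ball (hvac.mono fun x hx => by simp [hx]),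
      hmass]
  have henergy_s : ∫⁻ x in s, ENNReal.ofReal (ρ x) ^ γ ≤ ENNReal.ofReal ((γ - 1) * E₀) :=
    calc ∫⁻ x in s, ENNReal.ofReal (ρ x) ^ γ
        = ∫⁻ x in s, ENNReal.ofReal (ρ x ^ γ) := by
          simp_rw [ENNReal.ofReal_rpow_of_nonneg (hnn _) (zero_le_one.trans hγ.le)]
      _ ≤ _ := (lintegral_mono_set Set.sdiff_subset).trans henergy
  have hholder : ENNReal.ofReal M₀ ^ (γ / (γ - 1))
      ≤ ENNReal.ofReal ((γ - 1) * E₀) ^ (1 / (γ - 1)) * ENNReal.ofReal (R ^ N - rbar ^ N) * ω := by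
    have hvol : volume s = ENNReal.ofReal (R ^ N - rbar ^ N) * ω := by
      simpa using addHaar_ball_sdiff_ball volume (0 : EuclideanSpace ℝ (Fin N)) hrbar hrR
    rw [← hmass_s, mul_assoc, ← hvol, ← Measure.restrict_apply_univ]
    exact (lintegral_rpow_le_lintegral_rpow_mul_measure_univ hγ
      hmeas.ennreal_ofReal.aemeasurable).trans (by gcongr)
  have hvol_nonneg : 0 ≤ R ^ N - rbar ^ N := sub_nonneg.2 (pow_le_pow_left₀ hrbar hrR N)
  have hreal : M₀ ^ (γ / (γ - 1))
      ≤ ((γ - 1) * E₀) ^ (1 / (γ - 1)) * (R ^ N - rbar ^ N) * ω.toReal := by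
    have hγ₀ : 0 < γ - 1 := by linarith
    rw [ENNReal.ofReal_rpow_of_nonneg hM.le (by positivity),
      ENNReal.ofReal_rpow_of_nonneg (by positivity) (by positivity),
      ← ENNReal.ofReal_toReal (a := ω) measure_ball_lt_top.ne, ← ENNReal.ofReal_mul (by positivity),
      ← ENNReal.ofReal_mul (by positivity), ENNReal.ofReal_le_ofReal_iff (by positivity)] at hholder
    exact hholder
  have hbound : M₀ ^ (γ / (γ - 1)) / (ω.toReal * ((γ - 1) * E₀) ^ (1 / (γ - 1))) ≤ R ^ N - rbar ^ N :=
    div_le_of_le_mul₀ (by positivity) hvol_nonneg (by linarith)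
  linarith

theorem vacuum_radius_bound (N : ℕ) (hN : 1 ≤ N) (R rbar : ℝ) (hR : 0 < R)
    (hrbar : 0 ≤ rbar) (hrR : rbar ≤ R) (γ : ℝ) (hγ : 1 < γ)
    (ρ : EuclideanSpace ℝ (Fin N) → ℝ) (hmeas : Measurable ρ) (hnn : ∀ x, 0 ≤ ρ x)
    (hvac : ∀ᵐ x ∂(volume.restrict (ball (0 : EuclideanSpace ℝ (Fin N)) rbar)), ρ x = 0)
    (M₀ E₀ : ℝ) (hM : 0 < M₀) (hE : 0 < E₀)
    (hmass : ∫⁻ x in ball (0 : EuclideanSpace ℝ (Fin N)) R, ENNReal.ofReal (ρ x)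
        = ENNReal.ofReal M₀)
    (henergy : ∫⁻ x in ball (0 : EuclideanSpace ℝ (Fin N)) R, ENNReal.ofReal ((ρ x) ^ γ)
        ≤ ENNReal.ofReal ((γ - 1) * E₀)) :
    rbar ^ N ≤ R ^ N -
      M₀ ^ (γ / (γ - 1)) /
        ((volume (ball (0 : EuclideanSpace ℝ (Fin N)) 1)).toReal
          * ((γ - 1) * E₀) ^ (1 / (γ - 1))) :=
  vacuum_radius_bound_general N hN R rbar hrbar hrR γ hγ ρ hmeas hnn hvac M₀ E₀ hM hE hmass henergy
end
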